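/- Let y, q, b be positive integers with gcd(b,y) = 1, let g = gcd(y,q), and let x be any integer. Then Σ_{t : 1 ≤ t ≤ q, gcd(t,q) = 1, t ≡ b (mod g)} τ_q(x + t) equals 0 if gcd(g, q/g) > 1, and equals μ(q/g) · τ_{q/g}(x) · τ_g(x + b) if gcd(g, q/g) = 1. -/
import Mathlib

noncomputable section

/-- `e(t) = e^{2πit}`. -/
def e2pi (t : ℝ) : ℂ := Complex.exp (2 * Real.pi * Complex.I * t)

/-- The Ramanujan sum `τ_q(x) = Σ_{1 ≤ a ≤ q, gcd(a,q)=1} e(ax/q)`. -/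
def ram (q : ℕ) (x : ℤ) : ℂ :=
  ∑ a ∈ (Finset.Icc 1 q).filter (fun a : ℕ => Nat.gcd a q = 1),
    e2pi ((((a : ℤ) * x : ℤ) : ℝ) / (q : ℝ))

open Finset


lemma e2pi_add (s t : ℝ) : e2pi (s + t) = e2pi s * e2pi t := by
  simp only [e2pi, ← Complex.exp_add]; push_cast; ring_nf

lemma e2pi_int (k : ℤ) : e2pi k = 1 := by
  simp only [e2pi]
  have := Complex.exp_int_mul_two_pi_mul_I k
  rw [← this]; push_cast; ring_nf

lemma e2pi_eq_one_iff (t : ℝ) : e2pi t = 1 ↔ ∃ k : ℤ, t = k := by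
  simp only [e2pi, Complex.exp_eq_one_iff]
  constructor
  · rintro ⟨n, hn⟩
    refine ⟨n, ?_⟩
    have h2 : (2 * (Real.pi:ℂ) * Complex.I) ≠ 0 := by
      simp [Real.pi_ne_zero, Complex.I_ne_zero]
    have h3 : (2 * (Real.pi:ℂ) * Complex.I) * t = (2 * (Real.pi:ℂ) * Complex.I) * n := by
      rw [hn]; ring
    have : (t : ℂ) = n := mul_left_cancel₀ h2 h3
    exact_mod_cast this
  · rintro ⟨k, rfl⟩; exact ⟨k, by push_cast; ring⟩

lemma e2pi_div_congr {q : ℕ} (hq : q ≠ 0) {a b : ℤ} (h : a % (q:ℤ) = b % (q:ℤ)) :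
    e2pi ((a:ℝ) / q) = e2pi ((b:ℝ) / q) := by
  have hd : (q:ℤ) ∣ b - a := Int.ModEq.dvd h
  obtain ⟨k, hk⟩ := hd
  have hq' : (q:ℝ) ≠ 0 := Nat.cast_ne_zero.mpr hq
  have : (b:ℝ) / q = (a:ℝ)/q + k := by
    have hb : (b:ℝ) = a + q * k := by exact_mod_cast congrArg (fun z : ℤ => (z:ℝ)) (by linarith [hk] : b = a + q * k)
    rw [hb]; field_simp
  rw [this, e2pi_add, e2pi_int, mul_one]

lemma e2pi_pow (m : ℕ) (c : ℕ) : e2pi ((c:ℝ)/m) = (e2pi (1/m)) ^ c := by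
  simp only [e2pi, ← Complex.exp_nat_mul]
  push_cast; ring_nf

lemma geom_vanish {m : ℕ} (hm : 2 ≤ m) : ∑ c ∈ Finset.range m, e2pi ((c:ℝ)/m) = 0 := by
  have hm0 : (m:ℝ) ≠ 0 := by positivity
  have hx1 : e2pi (1/m) ≠ 1 := by
    rw [Ne, e2pi_eq_one_iff]
    rintro ⟨k, hk⟩
    have h1 : (0:ℝ) < 1/m := by positivity
    have h2 : (1:ℝ)/m < 1 := by
      rw [div_lt_one (by positivity)]; exact_mod_cast hm
    rw [hk] at h1 h2
    have : (0:ℤ) < k := by exact_mod_cast h1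
    have : (k:ℤ) < 1 := by exact_mod_cast h2
    omega
  have hxm : (e2pi (1/m)) ^ m = 1 := by
    rw [← e2pi_pow]
    rw [div_self hm0]
    exact_mod_cast e2pi_int 1
  calc ∑ c ∈ Finset.range m, e2pi ((c:ℝ)/m) = ∑ c ∈ Finset.range m, (e2pi (1/m))^c := by
        exact Finset.sum_congr rfl fun c _ => e2pi_pow m c
    _ = ((e2pi (1/m))^m - 1)/(e2pi (1/m) - 1) := geom_sum_eq hx1 m
    _ = 0 := by rw [hxm]; simp

def Fq (q : ℕ) : Finset ℕ := (Finset.range q).filter (fun a => Nat.gcd a q = 1)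

lemma sum_moebius_divisors (n : ℕ) :
    ∑ d ∈ n.divisors, (ArithmeticFunction.moebius d : ℤ) = if n = 1 then 1 else 0 := by
  have h := congrFun (congrArg (fun f : ArithmeticFunction ℤ => f.toFun) ArithmeticFunction.moebius_mul_coe_zeta) n
  simp only [ArithmeticFunction.toFun_eq] at h
  rw [ArithmeticFunction.coe_mul_zeta_apply] at h
  rw [h, ArithmeticFunction.one_apply]

lemma divisors_gcd_eq {m : ℕ} (hm : m ≠ 0) (a : ℕ) :
    (Nat.gcd a m).divisors = m.divisors.filter (· ∣ a) := by
  ext d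
  simp only [Nat.mem_divisors, Finset.mem_filter, Nat.dvd_gcd_iff]
  constructor
  · rintro ⟨⟨h1, h2⟩, h3⟩; exact ⟨⟨h2, hm⟩, h1⟩
  · rintro ⟨⟨h1, _⟩, h2⟩
    refine ⟨⟨h2, h1⟩, ?_⟩
    simp [Nat.gcd_eq_zero_iff, hm]

lemma inner_dvd_sum {m d : ℕ} (hd : d ∣ m) (hd0 : 0 < d) (hm : m ≠ 0) :
    ∑ a ∈ (Finset.range m).filter (d ∣ ·), e2pi ((a:ℝ)/m) =
      ∑ c ∈ Finset.range (m/d), e2pi ((c:ℝ)/(m/d : ℕ)) := by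
  refine Finset.sum_nbij' (fun a => a / d) (fun c => d * c) ?_ ?_ ?_ ?_ ?_
  · intro a ha
    simp only [Finset.mem_filter, Finset.mem_range] at ha
    exact Finset.mem_range.mpr (Nat.div_lt_div_of_lt_of_dvd hd ha.1)
  · intro c hc
    simp only [Finset.mem_range] at hc
    simp only [Finset.mem_filter, Finset.mem_range]
    refine ⟨?_, Dvd.intro c rfl⟩
    have h1 : d * c < d * (m/d) := by
      exact (Nat.mul_lt_mul_left hd0).mpr hc
    have h2 : d * (m/d) = m := Nat.mul_div_cancel' hd
    omega
  · intro a ha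
    simp only [Finset.mem_filter] at ha
    exact Nat.mul_div_cancel' ha.2
  · intro c hc
    exact Nat.mul_div_cancel_left c hd0
  · intro a ha
    simp only [Finset.mem_filter, Finset.mem_range] at ha
    obtain ⟨c, rfl⟩ := ha.2
    simp only [Nat.mul_div_cancel_left c hd0]
    congr 1
    have hmd : (m:ℝ) = (d:ℝ) * ((m/d : ℕ):ℝ) := by
      exact_mod_cast congrArg (fun z : ℕ => (z:ℝ)) (Nat.mul_div_cancel' hd).symm
    have h1 : ((m/d:ℕ):ℝ) ≠ 0 := by
      have : 0 < m / d := Nat.div_pos (Nat.le_of_dvd (Nat.pos_of_ne_zero hm) hd) hd0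
      positivity
    have h2 : (d:ℝ) ≠ 0 := by positivity
    rw [hmd]
    push_cast
    field_simp

lemma mu_sum {m : ℕ} (hm : m ≠ 0) :
    ∑ a ∈ Fq m, e2pi ((a:ℝ)/m) = ((ArithmeticFunction.moebius m : ℤ) : ℂ) := by
  have key : ∀ a : ℕ, (if Nat.gcd a m = 1 then e2pi ((a:ℝ)/m) else 0) =
      ∑ d ∈ m.divisors.filter (· ∣ a), ((ArithmeticFunction.moebius d : ℤ) : ℂ) * e2pi ((a:ℝ)/m) := by
    intro a
    rw [← divisors_gcd_eq hm a, ← Finset.sum_mul]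
    have h1 : (∑ d ∈ (Nat.gcd a m).divisors, ((ArithmeticFunction.moebius d : ℤ) : ℂ)) =
        if Nat.gcd a m = 1 then 1 else 0 := by
      have := sum_moebius_divisors (Nat.gcd a m)
      have h2 : ((∑ d ∈ (Nat.gcd a m).divisors, (ArithmeticFunction.moebius d : ℤ) : ℤ) : ℂ) =
          ((if Nat.gcd a m = 1 then (1:ℤ) else 0 : ℤ) : ℂ) := by rw [this]
      push_cast at h2
      rw [h2]
    rw [h1]
    split <;> simp
  calc ∑ a ∈ Fq m, e2pi ((a:ℝ)/m)
      = ∑ a ∈ Finset.range m, if Nat.gcd a m = 1 then e2pi ((a:ℝ)/m) else 0 := Finset.sum_filter _ _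
    _ = ∑ a ∈ Finset.range m, ∑ d ∈ m.divisors.filter (· ∣ a),
          ((ArithmeticFunction.moebius d : ℤ) : ℂ) * e2pi ((a:ℝ)/m) :=
        Finset.sum_congr rfl fun a _ => key a
    _ = ∑ a ∈ Finset.range m, ∑ d ∈ m.divisors,
          if d ∣ a then ((ArithmeticFunction.moebius d : ℤ) : ℂ) * e2pi ((a:ℝ)/m) else 0 :=
        Finset.sum_congr rfl fun a _ => (Finset.sum_filter _ _)
    _ = ∑ d ∈ m.divisors, ∑ a ∈ Finset.range m,
          if d ∣ a then ((ArithmeticFunction.moebius d : ℤ) : ℂ) * e2pi ((a:ℝ)/m) else 0 :=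
        Finset.sum_comm
    _ = ∑ d ∈ m.divisors, ((ArithmeticFunction.moebius d : ℤ) : ℂ) *
          ∑ a ∈ (Finset.range m).filter (d ∣ ·), e2pi ((a:ℝ)/m) := by
        refine Finset.sum_congr rfl fun d _ => ?_
        rw [Finset.mul_sum, Finset.sum_filter]
    _ = ∑ d ∈ m.divisors, ((ArithmeticFunction.moebius d : ℤ) : ℂ) * (if d = m then 1 else 0) := by
        refine Finset.sum_congr rfl fun d hd => ?_
        obtain ⟨hdvd, _⟩ := Nat.mem_divisors.mp hd
        have hd0 : 0 < d := Nat.pos_of_mem_divisors hd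
        rw [inner_dvd_sum hdvd hd0 hm]
        rcases Nat.lt_or_ge (m/d) 2 with h | h
        · have hmd : m / d = 1 := by
            have : 0 < m / d := Nat.div_pos (Nat.le_of_dvd (Nat.pos_of_ne_zero hm) hdvd) hd0
            omega
          have hdm : d = m := by
            have := Nat.mul_div_cancel' hdvd
            rw [hmd, Nat.mul_one] at this
            exact this
          rw [hmd, if_pos hdm]
          simp only [Finset.range_one, Finset.sum_singleton]
          have : ((0:ℕ):ℝ)/(1:ℕ) = ((0:ℤ):ℝ) := by norm_num
          rw [this, e2pi_int]
        · have hdm : d ≠ m := by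
            intro h'
            subst h'
            rw [Nat.div_self hd0] at h
            omega
          rw [if_neg hdm, geom_vanish h]
    _ = ((ArithmeticFunction.moebius m : ℤ) : ℂ) := by
        rw [Finset.sum_congr rfl (fun d _ => by rw [mul_ite, mul_one, mul_zero] :
          ∀ d ∈ m.divisors, ((ArithmeticFunction.moebius d : ℤ) : ℂ) * (if d = m then 1 else 0)
            = if d = m then ((ArithmeticFunction.moebius d : ℤ) : ℂ) else 0)]
        rw [Finset.sum_ite_eq' m.divisors m (fun d => ((ArithmeticFunction.moebius d : ℤ) : ℂ))]
        rw [if_pos (Nat.mem_divisors_self m hm)]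

def Sq (q : ℕ) (n : ℤ) : ℂ := ∑ a ∈ Fq q, e2pi ((((a : ℤ) * n : ℤ) : ℝ) / (q : ℝ))

lemma card_Fq (q : ℕ) : (Fq q).card = q.totient := by
  rw [Nat.totient_eq_card_coprime, Fq]
  congr 1
  apply Finset.filter_congr
  intro a _
  simp [Nat.Coprime, Nat.gcd_comm]

lemma Sq_congr {q : ℕ} (hq : q ≠ 0) {n n' : ℤ} (h : n % (q:ℤ) = n' % (q:ℤ)) :
    Sq q n = Sq q n' := by
  refine Finset.sum_congr rfl fun a _ => ?_
  exact e2pi_div_congr hq (Int.ModEq.mul_left (a:ℤ) h)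

lemma coprime_mod (x n : ℕ) : Nat.gcd (x % n) n = Nat.gcd x n := by
  conv_rhs => rw [Nat.gcd_comm x n, Nat.gcd_rec]

lemma Sq_mul {m g : ℕ} (hm : m ≠ 0) (hg : g ≠ 0) (hco : Nat.Coprime m g) (n : ℤ) :
    Sq (m * g) n = Sq m n * Sq g n := by
  have hmg : m * g ≠ 0 := Nat.mul_ne_zero hm hg
  have hmg0 : 0 < m * g := Nat.pos_of_ne_zero hmg
  set φ : ℕ × ℕ → ℕ := fun p => (p.1 * g + p.2 * m) % (m * g) with hφ
  have hmem : ∀ p ∈ Fq m ×ˢ Fq g, φ p ∈ Fq (m * g) := by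
    rintro ⟨a, c⟩ hp
    rw [Finset.mem_product] at hp
    obtain ⟨ha, hc⟩ := hp
    rw [Fq, Finset.mem_filter, Finset.mem_range] at ha hc ⊢
    refine ⟨Nat.mod_lt _ hmg0, ?_⟩
    rw [hφ]
    simp only
    rw [coprime_mod]
    have h1 : Nat.Coprime (a * g + c * m) m := by
      rw [Nat.coprime_add_mul_right_left]
      exact Nat.Coprime.mul ha.2 hco.symm
    have h2 : Nat.Coprime (a * g + c * m) g := by
      rw [add_comm, Nat.coprime_add_mul_right_left]
      exact Nat.Coprime.mul hc.2 hco
    exact Nat.Coprime.mul_right h1 h2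
  have hinj : Set.InjOn φ ↑(Fq m ×ˢ Fq g) := by
    rintro ⟨a, c⟩ hp ⟨a', c'⟩ hp' heq
    simp only [Finset.mem_coe, Finset.mem_product, Fq, Finset.mem_filter,
      Finset.mem_range] at hp hp'
    have hmod : (a * g + c * m) ≡ (a' * g + c' * m) [MOD m * g] := by
      unfold Nat.ModEq
      simpa [hφ] using heq
    have hma : a ≡ a' [MOD m] := by
      have h1 : (a * g + c * m) ≡ (a' * g + c' * m) [MOD m] :=
        hmod.of_dvd (dvd_mul_right m g)
      have h2 : a * g ≡ a' * g [MOD m] := by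
        have e1 : (a * g + c * m) ≡ a * g [MOD m] := by
          simpa using (Nat.ModEq.refl (a*g)).add_right (c*m) |>.trans
            ((Nat.modEq_zero_iff_dvd.mpr (dvd_mul_left m c)).add_left (a*g))
        have e2 : (a' * g + c' * m) ≡ a' * g [MOD m] := by
          simpa using (Nat.modEq_zero_iff_dvd.mpr (dvd_mul_left m c')).add_left (a'*g)
        exact e1.symm.trans (h1.trans e2)
      exact Nat.ModEq.cancel_right_of_coprime hco h2
    have hgc : c ≡ c' [MOD g] := by
      have h1 : (a * g + c * m) ≡ (a' * g + c' * m) [MOD g] :=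
        hmod.of_dvd (dvd_mul_left g m)
      have h2 : c * m ≡ c' * m [MOD g] := by
        have e1 : (a * g + c * m) ≡ c * m [MOD g] := by
          simpa using (Nat.modEq_zero_iff_dvd.mpr (dvd_mul_left g a)).add_right (c*m)
        have e2 : (a' * g + c' * m) ≡ c' * m [MOD g] := by
          simpa using (Nat.modEq_zero_iff_dvd.mpr (dvd_mul_left g a')).add_right (c'*m)
        exact e1.symm.trans (h1.trans e2)
      exact Nat.ModEq.cancel_right_of_coprime hco.symm h2
    have : a = a' := by
      have := Nat.ModEq.eq_of_lt_of_lt hma hp.1.1 hp'.1.1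
      exact this
    have : c = c' := Nat.ModEq.eq_of_lt_of_lt hgc hp.2.1 hp'.2.1
    simp_all
  have himage : (Fq m ×ˢ Fq g).image φ = Fq (m * g) := by
    apply Finset.eq_of_subset_of_card_le
    · intro u hu
      obtain ⟨p, hp, rfl⟩ := Finset.mem_image.mp hu
      exact hmem p hp
    · rw [Finset.card_image_of_injOn hinj, Finset.card_product]
      rw [card_Fq, card_Fq, card_Fq, Nat.totient_mul hco]
  calc Sq (m * g) n = ∑ u ∈ (Fq m ×ˢ Fq g).image φ, e2pi (((u : ℤ) * n : ℤ) / ((m*g : ℕ) : ℝ)) := by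
        rw [himage]; rfl
    _ = ∑ p ∈ Fq m ×ˢ Fq g, e2pi ((((φ p : ℤ) * n : ℤ)) / ((m*g : ℕ) : ℝ)) :=
        Finset.sum_image fun p hp p' hp' h => hinj (Finset.mem_coe.mpr hp) (Finset.mem_coe.mpr hp') h
    _ = ∑ p ∈ Fq m ×ˢ Fq g, e2pi ((((p.1 : ℤ) * n : ℤ)) / (m : ℝ)) *
          e2pi ((((p.2 : ℤ) * n : ℤ)) / (g : ℝ)) := by
        refine Finset.sum_congr rfl fun p hp => ?_
        have step1 : e2pi ((((φ p : ℤ) * n : ℤ)) / ((m*g : ℕ) : ℝ)) =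
            e2pi (((((p.1 * g + p.2 * m : ℕ) : ℤ) * n : ℤ)) / ((m*g : ℕ) : ℝ)) := by
          apply e2pi_div_congr hmg
          have : ((φ p : ℤ)) % ((m*g : ℕ) : ℤ) = (((p.1 * g + p.2 * m : ℕ) : ℤ)) % ((m*g : ℕ) : ℤ) := by
            rw [hφ]
            push_cast
            simp [Int.emod_emod_of_dvd]
          exact Int.ModEq.mul_right n this
        rw [step1, ← e2pi_add]
        congr 1
        have hmr : (m : ℝ) ≠ 0 := Nat.cast_ne_zero.mpr hm
        have hgr : (g : ℝ) ≠ 0 := Nat.cast_ne_zero.mpr hg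
        push_cast
        field_simp
    _ = Sq m n * Sq g n := by
        rw [Sq, Sq, Finset.sum_mul_sum]
        rw [Finset.sum_product]

lemma inner_unit_sum {m a : ℕ} (hm : m ≠ 0) (ha : Nat.gcd a m = 1) :
    ∑ u ∈ Fq m, e2pi ((((a * u : ℕ) : ℤ) : ℝ) / m) = ((ArithmeticFunction.moebius m : ℤ) : ℂ) := by
  have hm0 : 0 < m := Nat.pos_of_ne_zero hm
  set ψ : ℕ → ℕ := fun u => (a * u) % m with hψ
  have hmem : ∀ u ∈ Fq m, ψ u ∈ Fq m := by
    intro u hu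
    rw [Fq, Finset.mem_filter, Finset.mem_range] at hu ⊢
    refine ⟨Nat.mod_lt _ hm0, ?_⟩
    rw [hψ]; simp only
    rw [coprime_mod]
    exact Nat.Coprime.mul ha hu.2
  have hinj : Set.InjOn ψ ↑(Fq m) := by
    intro u hu u' hu' heq
    simp only [Finset.mem_coe, Fq, Finset.mem_filter, Finset.mem_range] at hu hu'
    have : a * u ≡ a * u' [MOD m] := heq
    have h2 : u ≡ u' [MOD m] :=
      Nat.ModEq.cancel_left_of_coprime (by rw [Nat.gcd_comm]; exact ha) this
    exact Nat.ModEq.eq_of_lt_of_lt h2 hu.1 hu'.1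
  have himage : (Fq m).image ψ = Fq m := by
    apply Finset.eq_of_subset_of_card_le
    · intro v hv
      obtain ⟨u, hu, rfl⟩ := Finset.mem_image.mp hv
      exact hmem u hu
    · rw [Finset.card_image_of_injOn hinj]
  calc ∑ u ∈ Fq m, e2pi ((((a * u : ℕ) : ℤ) : ℝ) / m)
      = ∑ u ∈ Fq m, e2pi (((ψ u : ℕ) : ℝ) / m) := by
        refine Finset.sum_congr rfl fun u hu => ?_
        have : ((a * u : ℕ) : ℤ) % (m : ℤ) = ((ψ u : ℕ) : ℤ) % (m : ℤ) := by
          rw [hψ]; push_cast; simp [Int.emod_emod_of_dvd]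
        have := e2pi_div_congr hm this
        simpa using this
    _ = ∑ v ∈ (Fq m).image ψ, e2pi ((v : ℝ) / m) := by
        rw [Finset.sum_image (fun u hu u' hu' h => hinj (Finset.mem_coe.mpr hu) (Finset.mem_coe.mpr hu') h)]
    _ = ((ArithmeticFunction.moebius m : ℤ) : ℂ) := by rw [himage]; exact mu_sum hm

lemma sum_Sq {m : ℕ} (hm : m ≠ 0) (x : ℤ) :
    ∑ u ∈ Fq m, Sq m (x + u) = ((ArithmeticFunction.moebius m : ℤ) : ℂ) * Sq m x := by
  have hmr : (m : ℝ) ≠ 0 := Nat.cast_ne_zero.mpr hm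
  have hsplit : ∀ a u : ℕ, e2pi ((((a:ℤ) * (x + u) : ℤ) : ℝ) / m) =
      e2pi ((((a:ℤ) * x : ℤ) : ℝ) / m) * e2pi ((((a * u : ℕ) : ℤ) : ℝ) / m) := by
    intro a u
    rw [← e2pi_add]
    congr 1
    push_cast
    field_simp
  calc ∑ u ∈ Fq m, Sq m (x + u)
      = ∑ u ∈ Fq m, ∑ a ∈ Fq m, e2pi ((((a:ℤ) * x : ℤ) : ℝ) / m) *
          e2pi ((((a * u : ℕ) : ℤ) : ℝ) / m) := by
        refine Finset.sum_congr rfl fun u _ => Finset.sum_congr rfl fun a _ => hsplit a u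
    _ = ∑ a ∈ Fq m, e2pi ((((a:ℤ) * x : ℤ) : ℝ) / m) *
          ∑ u ∈ Fq m, e2pi ((((a * u : ℕ) : ℤ) : ℝ) / m) := by
        rw [Finset.sum_comm]
        exact Finset.sum_congr rfl fun a _ => by rw [Finset.mul_sum]
    _ = ∑ a ∈ Fq m, e2pi ((((a:ℤ) * x : ℤ) : ℝ) / m) * ((ArithmeticFunction.moebius m : ℤ) : ℂ) := by
        refine Finset.sum_congr rfl fun a ha => ?_
        rw [Fq, Finset.mem_filter] at ha
        rw [inner_unit_sum hm ha.2]
    _ = ((ArithmeticFunction.moebius m : ℤ) : ℂ) * Sq m x := by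
        rw [Sq, Finset.mul_sum]
        exact Finset.sum_congr rfl fun a _ => by ring

lemma case1 {q g m p : ℕ} (hq : q ≠ 0) (hfact : q = g * m) (hp : p.Prime)
    (hpg : p ∣ g) (hpm : p ∣ m) (b : ℕ) (x : ℤ) :
    ∑ t ∈ (Finset.range q).filter (fun t => Nat.gcd t q = 1 ∧ t % g = b % g),
      Sq q (x + t) = 0 := by
  have hq0 : 0 < q := Nat.pos_of_ne_zero hq
  have hp0 : 0 < p := hp.pos
  have hp1 : 1 < p := hp.one_lt
  have hpq : p ∣ q := hfact ▸ Dvd.dvd.mul_left hpm g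
  set c : ℕ := q / p with hc
  have hcp : c * p = q := Nat.div_mul_cancel hpq
  have hc0 : 0 < c := Nat.div_pos (Nat.le_of_dvd hq0 hpq) hp0
  have hcq : c < q := Nat.div_lt_self hq0 hp1
  have hgc : g ∣ c := by
    obtain ⟨m', rfl⟩ := hpm
    have h1 : q / p = g * m' := by
      rw [hfact]
      rw [show g * (p * m') = (g * m') * p by ring]
      exact Nat.mul_div_cancel _ hp0
    rw [hc, h1]; exact dvd_mul_right g m'
  have hgq : g ∣ q := hfact ▸ dvd_mul_right g m
  have hrc : ∀ r : ℕ, r.Prime → r ∣ q → r ∣ c := by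
    intro r hr hrq
    rcases eq_or_ne r p with heq | hne
    · have hpp : p * p ∣ q := hfact ▸ mul_dvd_mul hpg hpm
      rw [heq, hc]
      exact (Nat.dvd_div_iff_mul_dvd hpq).mpr hpp
    · have : r ∣ c * p := hcp.symm ▸ hrq
      rcases (Nat.Prime.dvd_mul hr).mp this with h | h
      · exact h
      · exact absurd ((Nat.prime_dvd_prime_iff_eq hr hp).mp h) hne
  -- shift by d (all primes of q divide d) preserves coprimality
  have hcop : ∀ t d : ℕ, (∀ r : ℕ, r.Prime → r ∣ q → r ∣ d) → Nat.gcd t q = 1 →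
      Nat.gcd (t + d) q = 1 := by
    intro t d hdr ht
    by_contra h
    obtain ⟨r, hr, hr1, hr2⟩ := Nat.Prime.not_coprime_iff_dvd.mp h
    have hrd : r ∣ d := hdr r hr hr2
    have hrt : r ∣ t := by
      have := Nat.dvd_sub hr1 hrd
      simpa using this
    have : r ∣ Nat.gcd t q := Nat.dvd_gcd hrt hr2
    rw [ht] at this
    have h1 := Nat.le_of_dvd one_pos this
    have h2 := hr.two_le
    omega
  set T := (Finset.range q).filter (fun t => Nat.gcd t q = 1 ∧ t % g = b % g) with hT
  set σ : ℕ → ℕ := fun t => (t + c) % q with hσ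
  set τ : ℕ → ℕ := fun t => (t + (q - c)) % q with hτ
  have hd2 : ∀ r : ℕ, r.Prime → r ∣ q → r ∣ q - c := fun r hr hrq =>
    Nat.dvd_sub hrq (hrc r hr hrq)
  have hmemgen : ∀ d : ℕ, g ∣ d → (∀ r : ℕ, r.Prime → r ∣ q → r ∣ d) →
      ∀ t ∈ T, (t + d) % q ∈ T := by
    intro d hgd hdr t ht
    rw [hT, Finset.mem_filter, Finset.mem_range] at ht ⊢
    obtain ⟨htq, ht1, ht2⟩ := ht
    refine ⟨Nat.mod_lt _ hq0, ?_, ?_⟩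
    · rw [coprime_mod]
      exact hcop t d hdr ht1
    · rw [Nat.mod_mod_of_dvd _ hgq]
      obtain ⟨k, rfl⟩ := hgd
      rw [Nat.add_mul_mod_self_left, ht2]
  have hσT : ∀ t ∈ T, σ t ∈ T := hmemgen c hgc hrc
  have hτT : ∀ t ∈ T, τ t ∈ T := hmemgen (q - c) (Nat.dvd_sub hgq hgc) hd2
  have hτσ : ∀ t ∈ T, τ (σ t) = t := by
    intro t ht
    rw [hT, Finset.mem_filter, Finset.mem_range] at ht
    rw [hσ, hτ]
    simp only
    rw [Nat.mod_add_mod]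
    have : t + c + (q - c) = t + q := by omega
    rw [this, Nat.add_mod_right, Nat.mod_eq_of_lt ht.1]
  have hστ : ∀ t ∈ T, σ (τ t) = t := by
    intro t ht
    rw [hT, Finset.mem_filter, Finset.mem_range] at ht
    rw [hσ, hτ]
    simp only
    rw [Nat.mod_add_mod]
    have : t + (q - c) + c = t + q := by omega
    rw [this, Nat.add_mod_right, Nat.mod_eq_of_lt ht.1]
  rw [show (∑ t ∈ T, Sq q (x + t)) =
      ∑ a ∈ Fq q, ∑ t ∈ T, e2pi ((((a:ℤ) * (x + t) : ℤ) : ℝ) / q) from Finset.sum_comm]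
  refine Finset.sum_eq_zero fun a ha => ?_
  rw [Fq, Finset.mem_filter] at ha
  set W := ∑ t ∈ T, e2pi ((((a:ℤ) * (x + t) : ℤ) : ℝ) / q) with hW
  set z := e2pi ((((a * c : ℕ) : ℤ) : ℝ) / q) with hz
  have key : W = z * W := by
    conv_lhs => rw [hW]
    rw [show (∑ t ∈ T, e2pi ((((a:ℤ) * (x + t) : ℤ) : ℝ) / q)) =
        ∑ t ∈ T, e2pi ((((a:ℤ) * (x + σ t) : ℤ) : ℝ) / q) from
      (Finset.sum_nbij' σ τ hσT hτT hτσ hστ (fun t _ => rfl)).symm]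
    rw [Finset.mul_sum]
    refine Finset.sum_congr rfl fun t ht => ?_
    have step1 : e2pi ((((a:ℤ) * (x + σ t) : ℤ) : ℝ) / q) =
        e2pi ((((a:ℤ) * (x + t + c) : ℤ) : ℝ) / q) := by
      apply e2pi_div_congr hq
      apply Int.ModEq.mul_left
      have : ((σ t : ℕ) : ℤ) % (q : ℤ) = ((t + c : ℕ) : ℤ) % (q : ℤ) := by
        rw [hσ]; push_cast; simp [Int.emod_emod_of_dvd]
      calc (x + (σ t : ℕ)) % (q:ℤ) = (x % q + ((σ t : ℕ) : ℤ) % q) % q := Int.add_emod _ _ _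
        _ = (x % q + ((t + c : ℕ) : ℤ) % q) % q := by rw [this]
        _ = (x + ((t + c : ℕ) : ℤ)) % (q:ℤ) := (Int.add_emod _ _ _).symm
        _ = (x + t + c) % (q:ℤ) := by push_cast; ring_nf
    rw [step1]
    rw [show ((a:ℤ) * (x + t + c) : ℤ) = ((a * c : ℕ) : ℤ) + (a:ℤ) * (x + t) by push_cast; ring]
    rw [show ((((a * c : ℕ) : ℤ) + (a:ℤ) * (x + t) : ℤ) : ℝ) / q =
        (((a * c : ℕ) : ℤ) : ℝ) / q + (((a:ℤ) * (x + t) : ℤ) : ℝ) / q by push_cast; ring]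
    rw [e2pi_add]
  have hzne : z ≠ 1 := by
    have hpr : (p : ℝ) ≠ 0 := Nat.cast_ne_zero.mpr hp0.ne'
    rw [hz]
    have harg : (((a * c : ℕ) : ℤ) : ℝ) / q = (a : ℝ) / p := by
      have hq' : (q : ℝ) = (c : ℝ) * p := by exact_mod_cast hcp.symm
      have hcr : (c : ℝ) ≠ 0 := Nat.cast_ne_zero.mpr hc0.ne'
      rw [hq']
      push_cast
      field_simp
    rw [harg, Ne, e2pi_eq_one_iff]
    rintro ⟨k, hk⟩
    rw [div_eq_iff hpr] at hk
    have hpa : (a : ℤ) = k * p := by exact_mod_cast hk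
    have : (p : ℤ) ∣ (a : ℤ) := ⟨k, by linarith [hpa]⟩
    have hpa' : p ∣ a := Int.ofNat_dvd.mp (by exact_mod_cast this)
    have : p ∣ Nat.gcd a q := Nat.dvd_gcd hpa' hpq
    rw [ha.2] at this
    have := Nat.le_of_dvd one_pos this
    omega
  have : (1 - z) * W = 0 := by rw [sub_mul, one_mul, ← key, sub_self]
  rcases mul_eq_zero.mp this with h | h
  · exact absurd (by linear_combination -h : z = 1) hzne
  · exact h

lemma case2 {q g m b : ℕ} (hq : q ≠ 0) (hg : g ≠ 0) (hm : m ≠ 0) (hfact : q = g * m)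
    (hco : Nat.Coprime g m) (hbg : Nat.gcd b g = 1) (x : ℤ) :
    ∑ t ∈ (Finset.range q).filter (fun t => Nat.gcd t q = 1 ∧ t % g = b % g), Sq q (x + t)
      = ((ArithmeticFunction.moebius m : ℤ) : ℂ) * Sq m x * Sq g (x + b) := by
  subst hfact
  have hq0 : 0 < g * m := Nat.pos_of_ne_zero hq
  have hgq : g ∣ g * m := dvd_mul_right g m
  have hmq : m ∣ g * m := dvd_mul_left m g
  set T := (Finset.range (g * m)).filter (fun t => Nat.gcd t (g * m) = 1 ∧ t % g = b % g) with hT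
  have step1 : ∀ t ∈ T, Sq (g * m) (x + t) = Sq g (x + b) * Sq m (x + ((t % m : ℕ) : ℤ)) := by
    intro t ht
    rw [hT, Finset.mem_filter, Finset.mem_range] at ht
    obtain ⟨htq, ht1, ht2⟩ := ht
    rw [Sq_mul hg hm hco]
    congr 1
    · apply Sq_congr hg
      have hnat : ((t : ℤ)) % (g : ℤ) = ((b : ℤ)) % (g : ℤ) := by
        have : ((t % g : ℕ) : ℤ) = ((b % g : ℕ) : ℤ) := congrArg _ ht2
        push_cast at this
        exact this
      calc (x + t) % (g:ℤ) = (x % g + (t:ℤ) % g) % g := Int.add_emod _ _ _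
        _ = (x % g + (b:ℤ) % g) % g := by rw [hnat]
        _ = (x + b) % (g:ℤ) := (Int.add_emod _ _ _).symm
    · apply Sq_congr hm
      have hnat : ((t : ℤ)) % (m : ℤ) = (((t % m : ℕ) : ℤ)) % (m : ℤ) := by
        push_cast
        rw [Int.emod_emod_of_dvd _ dvd_rfl]
      calc (x + t) % (m:ℤ) = (x % m + (t:ℤ) % m) % m := Int.add_emod _ _ _
        _ = (x % m + ((t % m : ℕ) : ℤ) % m) % m := by rw [hnat]
        _ = (x + ((t % m : ℕ) : ℤ)) % (m:ℤ) := (Int.add_emod _ _ _).symm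
  have hmap : ∀ t ∈ T, t % m ∈ Fq m := by
    intro t ht
    rw [hT, Finset.mem_filter, Finset.mem_range] at ht
    rw [Fq, Finset.mem_filter, Finset.mem_range]
    refine ⟨Nat.mod_lt _ (Nat.pos_of_ne_zero hm), ?_⟩
    rw [coprime_mod]
    exact Nat.Coprime.coprime_dvd_right hmq ht.2.1
  have hinj : Set.InjOn (· % m) ↑T := by
    intro t ht t' ht' heq
    rw [Finset.mem_coe, hT, Finset.mem_filter, Finset.mem_range] at ht ht'
    have h1 : t ≡ t' [MOD m] := heq
    have h2 : t ≡ t' [MOD g] := by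
      unfold Nat.ModEq
      rw [ht.2.2, ht'.2.2]
    have : t ≡ t' [MOD g * m] := (Nat.modEq_and_modEq_iff_modEq_mul hco).mp ⟨h2, h1⟩
    exact Nat.ModEq.eq_of_lt_of_lt this ht.1 ht'.1
  have hsurj : ∀ u ∈ Fq m, ∃ t ∈ T, t % m = u := by
    intro u hu
    rw [Fq, Finset.mem_filter, Finset.mem_range] at hu
    obtain ⟨k, hk1, hk2⟩ := Nat.chineseRemainder hco b u
    refine ⟨k % (g * m), ?_, ?_⟩
    · rw [hT, Finset.mem_filter, Finset.mem_range]
      have hkg : (k % (g * m)) % g = b % g := by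
        have : k % (g * m) ≡ k [MOD g] := (Nat.mod_modEq k (g * m)).of_dvd hgq
        exact this.trans hk1
      have hkm : (k % (g * m)) % m = u % m := by
        have : k % (g * m) ≡ k [MOD m] := (Nat.mod_modEq k (g * m)).of_dvd hmq
        exact this.trans hk2
      refine ⟨Nat.mod_lt _ hq0, ?_, hkg⟩
      have hcg : Nat.gcd (k % (g * m)) g = 1 := by
        rw [← coprime_mod (k % (g * m)) g, hkg, coprime_mod]
        exact hbg
      have hcm : Nat.gcd (k % (g * m)) m = 1 := by
        rw [← coprime_mod (k % (g * m)) m, hkm, coprime_mod]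
        exact hu.2
      exact Nat.Coprime.mul_right hcg hcm
    · have : k % (g * m) ≡ k [MOD m] := (Nat.mod_modEq k (g * m)).of_dvd hmq
      have h2 := this.trans hk2
      unfold Nat.ModEq at h2
      rw [h2, Nat.mod_eq_of_lt hu.1]
  have himage : T.image (· % m) = Fq m := by
    apply Finset.Subset.antisymm
    · intro v hv
      obtain ⟨t, ht, rfl⟩ := Finset.mem_image.mp hv
      exact hmap t ht
    · intro u hu
      obtain ⟨t, ht, htu⟩ := hsurj u hu
      exact Finset.mem_image.mpr ⟨t, ht, htu⟩
  calc ∑ t ∈ T, Sq (g * m) (x + t) = ∑ t ∈ T, Sq g (x + b) * Sq m (x + ((t % m : ℕ) : ℤ)) :=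
        Finset.sum_congr rfl step1
    _ = Sq g (x + b) * ∑ t ∈ T, Sq m (x + ((t % m : ℕ) : ℤ)) := by rw [Finset.mul_sum]
    _ = Sq g (x + b) * ∑ u ∈ Fq m, Sq m (x + u) := by
        rw [← himage, Finset.sum_image (fun t ht t' ht' h =>
          hinj (Finset.mem_coe.mpr ht) (Finset.mem_coe.mpr ht') h)]
    _ = Sq g (x + b) * (((ArithmeticFunction.moebius m : ℤ) : ℂ) * Sq m x) := by rw [sum_Sq hm x]
    _ = ((ArithmeticFunction.moebius m : ℤ) : ℂ) * Sq m x * Sq g (x + b) := by ring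

lemma filter_Icc_eq_range {q : ℕ} (hq : 2 ≤ q) (P : ℕ → Prop) [DecidablePred P] :
    (Finset.Icc 1 q).filter (fun a => Nat.gcd a q = 1 ∧ P a) =
      (Finset.range q).filter (fun a => Nat.gcd a q = 1 ∧ P a) := by
  ext a
  simp only [Finset.mem_filter, Finset.mem_Icc, Finset.mem_range]
  constructor
  · rintro ⟨⟨h1, h2⟩, h3, h4⟩
    refine ⟨?_, h3, h4⟩
    rcases eq_or_lt_of_le h2 with rfl | h
    · rw [Nat.gcd_self] at h3; omega
    · exact h
  · rintro ⟨h1, h3, h4⟩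
    refine ⟨⟨?_, le_of_lt h1⟩, h3, h4⟩
    rcases Nat.eq_zero_or_pos a with rfl | h
    · rw [Nat.gcd_zero_left] at h3; omega
    · exact h

lemma ram_eq_Sq {q : ℕ} (hq : q ≠ 0) (n : ℤ) : ram q n = Sq q n := by
  rcases eq_or_lt_of_le (Nat.one_le_iff_ne_zero.mpr hq) with h1 | h2
  · subst h1
    rw [ram, Sq, Fq]
    rw [show Finset.Icc 1 1 = {1} from rfl]
    rw [show Finset.range 1 = {0} from rfl]
    rw [Finset.filter_singleton, Finset.filter_singleton]
    norm_num
    rw [show ((n:ℝ)) = (((n:ℤ)):ℝ) by norm_num, e2pi_int n,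
      show ((0:ℝ)) = (((0:ℤ)):ℝ) by norm_num, e2pi_int 0]
  · rw [ram, Sq, Fq]
    have := filter_Icc_eq_range (q := q) h2 (fun _ => True)
    have hset : (Finset.Icc 1 q).filter (fun a => Nat.gcd a q = 1) =
        (Finset.range q).filter (fun a => Nat.gcd a q = 1) := by
      have h1 : (Finset.Icc 1 q).filter (fun a => Nat.gcd a q = 1) =
          (Finset.Icc 1 q).filter (fun a => Nat.gcd a q = 1 ∧ True) := by simp
      have h2' : (Finset.range q).filter (fun a => Nat.gcd a q = 1) =
          (Finset.range q).filter (fun a => Nat.gcd a q = 1 ∧ True) := by simp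
      rw [h1, h2', this]
    rw [hset]

lemma Sq_one (n : ℤ) : Sq 1 n = 1 := by
  rw [Sq, Fq]
  rw [show Finset.range 1 = {0} from rfl, Finset.filter_singleton]
  norm_num
  rw [show ((0:ℝ)) = (((0:ℤ)):ℝ) by norm_num, e2pi_int 0]

lemma main_convert {q g b : ℕ} (hq : q ≠ 0) (hgq : g ∣ q) (x : ℤ) :
    ∑ t ∈ (Finset.Icc 1 q).filter (fun t => Nat.gcd t q = 1 ∧ t % g = b % g), ram q (x + t)
    = ∑ t ∈ (Finset.range q).filter (fun t => Nat.gcd t q = 1 ∧ t % g = b % g), Sq q (x + t) := by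
  rcases eq_or_lt_of_le (Nat.one_le_iff_ne_zero.mpr hq) with h1 | h2
  · have hg1 : g = 1 := Nat.dvd_one.mp (h1 ▸ hgq)
    subst hg1
    subst h1
    rw [show Finset.Icc 1 1 = {1} from rfl, show Finset.range 1 = {0} from rfl,
      Finset.filter_singleton, Finset.filter_singleton]
    norm_num
    rw [if_pos (Nat.mod_one b).symm, if_pos (Nat.mod_one b).symm,
      Finset.sum_singleton, Finset.sum_singleton, ram_eq_Sq one_ne_zero, Sq_one, Sq_one]
  · rw [filter_Icc_eq_range h2 (fun t => t % g = b % g)]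
    exact Finset.sum_congr rfl fun t _ => ram_eq_Sq hq _

theorem cohen_identity_on_progression (y q b : ℕ) (hy : 0 < y) (hq : 0 < q) (hb : 0 < b)
    (hby : Nat.gcd b y = 1) (x : ℤ) :
    (1 < Nat.gcd (Nat.gcd y q) (q / Nat.gcd y q) →
        ∑ t ∈ (Finset.Icc 1 q).filter
            (fun t : ℕ => Nat.gcd t q = 1 ∧ t % Nat.gcd y q = b % Nat.gcd y q),
          ram q (x + t) = 0) ∧
    (Nat.gcd (Nat.gcd y q) (q / Nat.gcd y q) = 1 →
        ∑ t ∈ (Finset.Icc 1 q).filter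
            (fun t : ℕ => Nat.gcd t q = 1 ∧ t % Nat.gcd y q = b % Nat.gcd y q),
          ram q (x + t) =
        ((ArithmeticFunction.moebius (q / Nat.gcd y q) : ℤ) : ℂ) *
          ram (q / Nat.gcd y q) x * ram (Nat.gcd y q) (x + b)) := by
  set g := Nat.gcd y q with hgdef
  set m := q / g with hmdef
  have hq0 : q ≠ 0 := hq.ne'
  have hgq : g ∣ q := Nat.gcd_dvd_right y q
  have hg0 : g ≠ 0 := (Nat.gcd_pos_of_pos_right y hq).ne'
  have hfact : q = g * m := (Nat.mul_div_cancel' hgq).symm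
  have hm0 : m ≠ 0 := by
    intro h
    rw [h, Nat.mul_zero] at hfact
    exact hq0 hfact
  constructor
  · intro hcase
    set d := Nat.gcd g m with hd
    have hp : d.minFac.Prime := Nat.minFac_prime (by omega)
    have hpd : d.minFac ∣ d := Nat.minFac_dvd d
    rw [main_convert hq0 hgq x]
    exact case1 hq0 hfact hp (hpd.trans (Nat.gcd_dvd_left g m))
      (hpd.trans (Nat.gcd_dvd_right g m)) b x
  · intro hcase
    have hbg : Nat.gcd b g = 1 :=
      Nat.Coprime.coprime_dvd_right (Nat.gcd_dvd_left y q) hby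
    rw [main_convert hq0 hgq x]
    rw [case2 hq0 hg0 hm0 hfact hcase hbg x]
    rw [ram_eq_Sq hm0, ram_eq_Sq hg0]

end
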